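/- Let ρ ∈ ℰ¹ and e ∈ ℜ_ρ(ℰ). Then the derivation ∂_e is locally nilpotent; more precisely, ∂_e^k(χ^u) = 0 for every u ∈ Γ and every integer k > ⟨ρ, u⟩. -/

import Mathlib

open scoped BigOperators

namespace RootSubgroups

/-- The natural pairing on `ℚⁿ`, identifying `N_ℚ` with the dual of `M_ℚ`. -/
def pairQ {n : ℕ} (q v : Fin n → ℚ) : ℚ := ∑ i, q i * v i

/-- A vector of `M_ℚ = ℚⁿ` is a lattice point (lies in `M = ℤⁿ`) if all its
coordinates are integers. -/
def IsLatticePt {n : ℕ} (v : Fin n → ℚ) : Prop := ∀ i, ∃ z : ℤ, v i = (z : ℚ)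

/-- The convex cone generated by a set `S ⊆ ℚⁿ`: all finite nonnegative
rational combinations of elements of `S`. -/
def coneHull {n : ℕ} (S : Set (Fin n → ℚ)) : Set (Fin n → ℚ) :=
  {x | ∃ (F : Finset (Fin n → ℚ)) (c : (Fin n → ℚ) → ℚ),
      (F : Set (Fin n → ℚ)) ⊆ S ∧ (∀ v, 0 ≤ c v) ∧ x = ∑ v ∈ F, c v • v}

/-- A finitely generated convex cone: the cone generated by a finite set. -/
def IsFGCone {n : ℕ} (C : Set (Fin n → ℚ)) : Prop :=
  ∃ S : Finset (Fin n → ℚ), C = coneHull (S : Set (Fin n → ℚ))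

/-- The dual cone `ℰ = 𝒢^∨ = {q : ⟨q, v⟩ ≥ 0 for all v ∈ 𝒢}`. -/
def dualCone {n : ℕ} (C : Set (Fin n → ℚ)) : Set (Fin n → ℚ) :=
  {q | ∀ v ∈ C, 0 ≤ pairQ q v}

/-- A face of the dual cone `ℰ = C^∨`: a subset of the form
`{q ∈ ℰ : ⟨q, v⟩ = 0}` for some `v ∈ C`. -/
def IsFaceOfDual {n : ℕ} (C F : Set (Fin n → ℚ)) : Prop :=
  ∃ v ∈ C, F = {q ∈ dualCone C | pairQ q v = 0}

/-- The ray `ℚ_{≥0}·ρ` spanned by a vector `ρ`. -/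
def raySet {n : ℕ} (ρ : Fin n → ℚ) : Set (Fin n → ℚ) :=
  {x | ∃ c : ℚ, 0 ≤ c ∧ x = c • ρ}

/-- A lattice vector is primitive if it is not a positive integer multiple
`k·q` (`k ≠ 1`) of a lattice vector `q`. -/
def IsPrimitive {n : ℕ} (ρ : Fin n → ℚ) : Prop :=
  IsLatticePt ρ ∧ ∀ (k : ℕ) (q : Fin n → ℚ), IsLatticePt q → ρ = (k : ℚ) • q → k = 1

/-- `ℰ¹`: the set of primitive lattice vectors `ρ ∈ N` such that `ℚ_{≥0}·ρ` is
a ray (one-dimensional face) of the dual cone `ℰ = C^∨`. -/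
def E1 {n : ℕ} (C : Set (Fin n → ℚ)) : Set (Fin n → ℚ) :=
  {ρ | IsPrimitive ρ ∧ IsFaceOfDual C (raySet ρ)}

/-- The Demazure roots of `ℰ = C^∨` at `ρ ∈ ℰ¹`:
`ℜ_ρ(ℰ) = {e ∈ M : ⟨ρ, e⟩ = −1 and ⟨ρ', e⟩ ≥ 0 for all ρ' ∈ ℰ¹ \ {ρ}}`. -/
def DemRootsAt {n : ℕ} (C : Set (Fin n → ℚ)) (ρ : Fin n → ℚ) : Set (Fin n → ℚ) :=
  {e | IsLatticePt e ∧ pairQ ρ e = -1 ∧ ∀ ρ' ∈ E1 C, ρ' ≠ ρ → 0 ≤ pairQ ρ' e}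

/-- The set `ℜ(ℰ)` of all Demazure roots of `ℰ = C^∨`. -/
def DemRoots {n : ℕ} (C : Set (Fin n → ℚ)) : Set (Fin n → ℚ) :=
  ⋃ ρ ∈ E1 C, DemRootsAt C ρ

/-- A face of the cone `C`: a subset of the form `{v ∈ C : ⟨q, v⟩ = 0}` for
some `q` in the dual cone of `C`. -/
def IsFaceOfCone {n : ℕ} (C F : Set (Fin n → ℚ)) : Prop :=
  ∃ q ∈ dualCone C, F = {v ∈ C | pairQ q v = 0}

/-- A facet of the cone `C`: a face whose linear span has codimension one in
the linear span of `C`. -/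
def IsFacetOfCone {n : ℕ} (C F : Set (Fin n → ℚ)) : Prop :=
  IsFaceOfCone C F ∧
    Module.finrank ℚ ↥(Submodule.span ℚ F) + 1 = Module.finrank ℚ ↥(Submodule.span ℚ C)

end RootSubgroups

namespace RootSubgroups

/-- The defining property of the derivation `∂_e` of the monoid algebra
`A = K[Γ]` associated with a Demazure root `e ∈ ℜ_ρ(ℰ)`:
`∂_e(χ^u) = ⟨ρ, u⟩ χ^{u+e}` for `u ∈ Γ` with `⟨ρ, u⟩ > 0`, and
`∂_e(χ^u) = 0` for `u ∈ Γ` with `⟨ρ, u⟩ = 0`. -/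
def IsDemazureDerivation {n : ℕ} {K : Type*} [Field K]
    (Γ : AddSubmonoid (Fin n → ℚ)) (ρ e : Fin n → ℚ)
    (D : Derivation K (AddMonoidAlgebra K Γ) (AddMonoidAlgebra K Γ)) : Prop :=
  ∀ u : Γ,
    (∀ h : (↑u + e : Fin n → ℚ) ∈ Γ, 0 < pairQ ρ ↑u →
      D (AddMonoidAlgebra.single u 1) =
        AddMonoidAlgebra.single (⟨↑u + e, h⟩ : Γ) ((pairQ ρ ↑u : ℚ) : K)) ∧
    (pairQ ρ ↑u = 0 → D (AddMonoidAlgebra.single u 1) = 0)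

end RootSubgroups

namespace RootSubgroups

variable {n : ℕ}

lemma pairQ_add_right (q a b : Fin n → ℚ) : pairQ q (a + b) = pairQ q a + pairQ q b := by
  simp [pairQ, mul_add, Finset.sum_add_distrib]

lemma pairQ_sub_right (q a b : Fin n → ℚ) : pairQ q (a - b) = pairQ q a - pairQ q b := by
  simp [pairQ, mul_sub, Finset.sum_sub_distrib]

lemma pairQ_smul_right (q : Fin n → ℚ) (c : ℚ) (a : Fin n → ℚ) :
    pairQ q (c • a) = c * pairQ q a := by
  simp [pairQ, Finset.mul_sum, mul_left_comm]

lemma pairQ_comm (q v : Fin n → ℚ) : pairQ q v = pairQ v q := by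
  simp [pairQ, mul_comm]

lemma pairQ_add_left (a b v : Fin n → ℚ) : pairQ (a + b) v = pairQ a v + pairQ b v := by
  rw [pairQ_comm, pairQ_add_right, pairQ_comm a, pairQ_comm b]

lemma pairQ_sub_left (a b v : Fin n → ℚ) : pairQ (a - b) v = pairQ a v - pairQ b v := by
  rw [pairQ_comm, pairQ_sub_right, pairQ_comm a, pairQ_comm b]

lemma pairQ_smul_left (c : ℚ) (a v : Fin n → ℚ) : pairQ (c • a) v = c * pairQ a v := by
  rw [pairQ_comm, pairQ_smul_right, pairQ_comm]

lemma pairQ_neg_left (q v : Fin n → ℚ) : pairQ (-q) v = - pairQ q v := by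
  simp [pairQ]

lemma pairQ_zero_left (v : Fin n → ℚ) : pairQ 0 v = 0 := by simp [pairQ]

lemma pairQ_zero_right (v : Fin n → ℚ) : pairQ v 0 = 0 := by simp [pairQ]

lemma pairQ_sum_right {ι : Type*} (q : Fin n → ℚ) (G : Finset ι) (f : ι → Fin n → ℚ) :
    pairQ q (∑ v ∈ G, f v) = ∑ v ∈ G, pairQ q (f v) := by
  unfold pairQ
  simp only [Finset.sum_apply, Finset.mul_sum]
  exact Finset.sum_comm

lemma pairQ_single_right (q : Fin n → ℚ) (i : Fin n) : pairQ q (Pi.single i 1) = q i := by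
  unfold pairQ
  rw [Finset.sum_eq_single i]
  · simp
  · intro j _ hj; simp [Pi.single_apply, hj]
  · simp

lemma pairQ_self_pos {x : Fin n → ℚ} (hx : x ≠ 0) : 0 < pairQ x x := by
  have h : ∃ i, x i ≠ 0 := by
    by_contra h
    push_neg at h
    exact hx (funext h)
  obtain ⟨i, hi⟩ := h
  refine Finset.sum_pos' (fun j _ => mul_self_nonneg _) ⟨i, Finset.mem_univ i, ?_⟩
  exact mul_self_pos.mpr hi

lemma mem_coneHull_finset {F : Finset (Fin n → ℚ)} {x : Fin n → ℚ} :
    x ∈ coneHull (F : Set (Fin n → ℚ)) ↔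
      ∃ c : (Fin n → ℚ) → ℚ, (∀ v, 0 ≤ c v) ∧ x = ∑ v ∈ F, c v • v := by
  constructor
  · rintro ⟨F', c, hF', hc, rfl⟩
    have hsub : F' ⊆ F := Finset.coe_subset.mp hF'
    refine ⟨fun v => if v ∈ F' then c v else 0, fun v => ?_, ?_⟩
    · dsimp only
      split
      · exact hc _
      · exact le_rfl
    · rw [← Finset.sum_subset hsub (fun v _ hv => by dsimp only; rw [if_neg hv, zero_smul])]
      exact Finset.sum_congr rfl fun v hv => by dsimp only; rw [if_pos hv]
  · rintro ⟨c, hc, rfl⟩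
    exact ⟨F, c, subset_rfl, hc, rfl⟩

lemma zero_mem_coneHull (S : Set (Fin n → ℚ)) : 0 ∈ coneHull S :=
  ⟨∅, 0, by simp, fun _ => le_rfl, by simp⟩

lemma subset_coneHull (S : Set (Fin n → ℚ)) : S ⊆ coneHull S := by
  intro x hx
  exact ⟨{x}, fun _ => 1, by simpa using hx, fun _ => zero_le_one, by simp⟩

lemma coneHull_mono {S T : Set (Fin n → ℚ)} (h : S ⊆ T) : coneHull S ⊆ coneHull T := by
  rintro x ⟨F, c, hF, hc, rfl⟩
  exact ⟨F, c, hF.trans h, hc, rfl⟩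

lemma coneHull_add_mem {F : Finset (Fin n → ℚ)} {x y : Fin n → ℚ}
    (hx : x ∈ coneHull (F : Set (Fin n → ℚ))) (hy : y ∈ coneHull (F : Set (Fin n → ℚ))) :
    x + y ∈ coneHull (F : Set (Fin n → ℚ)) := by
  obtain ⟨c, hc, rfl⟩ := mem_coneHull_finset.mp hx
  obtain ⟨d, hd, rfl⟩ := mem_coneHull_finset.mp hy
  refine mem_coneHull_finset.mpr ⟨fun v => c v + d v, fun v => add_nonneg (hc v) (hd v), ?_⟩
  rw [← Finset.sum_add_distrib]
  exact Finset.sum_congr rfl fun v _ => (add_smul _ _ _).symm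

lemma coneHull_smul_mem {F : Finset (Fin n → ℚ)} {t : ℚ} (ht : 0 ≤ t) {x : Fin n → ℚ}
    (hx : x ∈ coneHull (F : Set (Fin n → ℚ))) :
    t • x ∈ coneHull (F : Set (Fin n → ℚ)) := by
  obtain ⟨c, hc, rfl⟩ := mem_coneHull_finset.mp hx
  refine mem_coneHull_finset.mpr ⟨fun v => t * c v, fun v => mul_nonneg ht (hc v), ?_⟩
  rw [Finset.smul_sum]
  exact Finset.sum_congr rfl fun v _ => (mul_smul _ _ _).symm

lemma coneHull_sum_mem {ι : Type*} {F : Finset (Fin n → ℚ)} {G : Finset ι} {f : ι → Fin n → ℚ}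
    (h : ∀ i ∈ G, f i ∈ coneHull (F : Set (Fin n → ℚ))) :
    (∑ i ∈ G, f i) ∈ coneHull (F : Set (Fin n → ℚ)) := by
  classical
  induction G using Finset.induction_on with
  | empty => simpa using zero_mem_coneHull _
  | insert _ _ hni ih =>
    rw [Finset.sum_insert hni]
    exact coneHull_add_mem (h _ (Finset.mem_insert_self _ _))
      (ih fun i hi => h i (Finset.mem_insert_of_mem hi))


lemma farkas_aux : ∀ (N : ℕ) (F : Finset (Fin n → ℚ)), F.card ≤ N →
    ∀ x : Fin n → ℚ, x ∉ coneHull (F : Set (Fin n → ℚ)) →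
    ∃ q, (∀ v ∈ F, 0 ≤ pairQ q v) ∧ pairQ q x < 0 := by
  classical
  intro N
  induction N with
  | zero =>
    intro F hF x hx
    have hFe : F = ∅ := Finset.card_eq_zero.mp (Nat.le_zero.mp hF)
    subst hFe
    have hx0 : x ≠ 0 := fun h => hx (h ▸ zero_mem_coneHull _)
    refine ⟨-x, by simp, ?_⟩
    rw [pairQ_neg_left]
    linarith [pairQ_self_pos hx0]
  | succ N IH =>
    intro F hF x hx
    rcases F.eq_empty_or_nonempty with rfl | ⟨a, ha⟩
    · have hx0 : x ≠ 0 := fun h => hx (h ▸ zero_mem_coneHull _)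
      refine ⟨-x, by simp, ?_⟩
      rw [pairQ_neg_left]
      linarith [pairQ_self_pos hx0]
    · set s := F.erase a with hs
      have hFs : F = insert a s := (Finset.insert_erase ha).symm
      have hcards : s.card ≤ N := by
        have h0 := Finset.card_erase_of_mem ha
        rw [← hs] at h0
        have h1 : 0 < F.card := Finset.card_pos.mpr ⟨a, ha⟩
        omega
      have hssub : (s : Set (Fin n → ℚ)) ⊆ (F : Set (Fin n → ℚ)) := by
        exact_mod_cast Finset.erase_subset a F
      have hxs : x ∉ coneHull (s : Set (Fin n → ℚ)) := fun h => hx (coneHull_mono hssub h)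
      obtain ⟨q, hq, hqx⟩ := IH s hcards x hxs
      by_cases hqa : 0 ≤ pairQ q a
      · refine ⟨q, fun v hv => ?_, hqx⟩
        rw [hFs] at hv
        rcases Finset.mem_insert.mp hv with rfl | hv
        · exact hqa
        · exact hq v hv
      · push_neg at hqa
        have hqa0 : pairQ q a ≠ 0 := ne_of_lt hqa
        set proj : (Fin n → ℚ) → (Fin n → ℚ) :=
          fun w => w - (pairQ q w / pairQ q a) • a with hproj
        have hprojval : ∀ q₁ w, pairQ q₁ (proj w)
            = pairQ q₁ w - pairQ q w / pairQ q a * pairQ q₁ a := by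
          intro q₁ w
          rw [hproj]
          dsimp only
          rw [pairQ_sub_right, pairQ_smul_right]
        have hqproj : ∀ w, pairQ q (proj w) = 0 := by
          intro w
          rw [hprojval, div_mul_cancel₀ _ hqa0, sub_self]
        set s' := s.image proj with hs'
        set x' := proj x with hx'
        have hxx' : x = x' + (pairQ q x / pairQ q a) • a := by
          rw [hx', hproj]
          dsimp only
          rw [sub_add_cancel]
        have hamem : a ∈ coneHull (F : Set (Fin n → ℚ)) :=
          subset_coneHull _ (by exact_mod_cast ha)
        have hx's' : x' ∉ coneHull (s' : Set (Fin n → ℚ)) := by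
          intro hmem
          obtain ⟨c, hc, hrep⟩ := mem_coneHull_finset.mp hmem
          apply hx
          rw [hxx', hrep]
          refine coneHull_add_mem (coneHull_sum_mem ?_) ?_
          · intro v' hv'
            obtain ⟨v, hv, rfl⟩ := Finset.mem_image.mp hv'
            refine coneHull_smul_mem (hc _) ?_
            have h1 : v ∈ coneHull (F : Set (Fin n → ℚ)) := by
              refine subset_coneHull _ ?_
              exact_mod_cast Finset.mem_of_mem_erase (hs ▸ hv)
            have h2 : (-(pairQ q v / pairQ q a)) • a ∈ coneHull (F : Set (Fin n → ℚ)) := by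
              refine coneHull_smul_mem ?_ hamem
              have := hq v hv
              have : pairQ q v / pairQ q a ≤ 0 := div_nonpos_of_nonneg_of_nonpos this (le_of_lt hqa)
              linarith
            have h3 := coneHull_add_mem h1 h2
            have : proj v = v + (-(pairQ q v / pairQ q a)) • a := by
              rw [hproj]; dsimp only; rw [neg_smul, ← sub_eq_add_neg]
            rwa [this]
          · refine coneHull_smul_mem ?_ hamem
            exact le_of_lt (div_pos_of_neg_of_neg hqx hqa)
        have hcard' : s'.card ≤ N := le_trans Finset.card_image_le hcards
        obtain ⟨q₁, hq₁, hq₁x'⟩ := IH s' hcard' x' hx's'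
        refine ⟨q₁ - (pairQ q₁ a / pairQ q a) • q, fun v hv => ?_, ?_⟩
        · rw [hFs] at hv
          rw [pairQ_sub_left, pairQ_smul_left]
          rcases Finset.mem_insert.mp hv with rfl | hv
          · rw [div_mul_cancel₀ _ hqa0, sub_self]
          · have h4 := hq₁ (proj v) (Finset.mem_image_of_mem proj hv)
            rw [hprojval] at h4
            have : pairQ q₁ v - pairQ q₁ a / pairQ q a * pairQ q v
                = pairQ q₁ v - pairQ q v / pairQ q a * pairQ q₁ a := by ring
            linarith
        · rw [pairQ_sub_left, pairQ_smul_left]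
          rw [hx', hprojval] at hq₁x'
          have : pairQ q₁ x - pairQ q₁ a / pairQ q a * pairQ q x
              = pairQ q₁ x - pairQ q x / pairQ q a * pairQ q₁ a := by ring
          linarith

lemma farkas (F : Finset (Fin n → ℚ)) (x : Fin n → ℚ)
    (hx : x ∉ coneHull (F : Set (Fin n → ℚ))) :
    ∃ q, (∀ v ∈ F, 0 ≤ pairQ q v) ∧ pairQ q x < 0 :=
  farkas_aux F.card F le_rfl x hx



def pairLin (s : Fin n → ℚ) : (Fin n → ℚ) →ₗ[ℚ] ℚ where
  toFun v := pairQ v s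
  map_add' a b := pairQ_add_left a b s
  map_smul' c a := by simp [pairQ_smul_left]

lemma pairLin_apply (s v : Fin n → ℚ) : pairLin s v = pairQ v s := rfl

lemma pointed_of_full {C : Set (Fin n → ℚ)} (hfull : Submodule.span ℚ C = ⊤)
    {q : Fin n → ℚ} (hq : ∀ v ∈ C, pairQ q v = 0) : q = 0 := by
  have hle : Submodule.span ℚ C ≤ LinearMap.ker (pairLin q) := by
    rw [Submodule.span_le]
    intro v hv
    rw [SetLike.mem_coe, LinearMap.mem_ker, pairLin_apply, pairQ_comm]
    exact hq v hv
  rw [hfull] at hle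
  funext i
  have h := hle (Submodule.mem_top : Pi.single i 1 ∈ (⊤ : Submodule ℚ (Fin n → ℚ)))
  rw [LinearMap.mem_ker, pairLin_apply, pairQ_comm, pairQ_single_right] at h
  exact h

lemma mem_dualCone_coneHull {S : Finset (Fin n → ℚ)} {q : Fin n → ℚ} :
    q ∈ dualCone (coneHull (S : Set (Fin n → ℚ))) ↔ ∀ s ∈ S, 0 ≤ pairQ q s := by
  constructor
  · intro h s hs
    exact h s (subset_coneHull _ (by exact_mod_cast hs))
  · intro h v hv
    obtain ⟨c, hc, rfl⟩ := mem_coneHull_finset.mp hv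
    rw [pairQ_sum_right]
    refine Finset.sum_nonneg fun s hs => ?_
    rw [pairQ_smul_right]
    exact mul_nonneg (hc s) (h s hs)

lemma self_mem_raySet (q : Fin n → ℚ) : q ∈ raySet q := ⟨1, zero_le_one, (one_smul _ _).symm⟩

lemma raySet_smul {c : ℚ} (hc : 0 < c) (q : Fin n → ℚ) : raySet (c • q) = raySet q := by
  ext x
  constructor
  · rintro ⟨t, ht, rfl⟩
    exact ⟨t * c, mul_nonneg ht hc.le, by rw [mul_smul]⟩
  · rintro ⟨t, ht, rfl⟩
    exact ⟨t / c, div_nonneg ht hc.le, by rw [smul_smul, div_mul_cancel₀ _ (ne_of_gt hc)]⟩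

lemma E1_subset_dualCone {C : Set (Fin n → ℚ)} {ρ : Fin n → ℚ} (h : ρ ∈ E1 C) :
    ρ ∈ dualCone C := by
  obtain ⟨-, v, hv, hface⟩ := h
  have hmem := self_mem_raySet ρ
  rw [hface] at hmem
  exact hmem.1

lemma pairQ_int {ρ u : Fin n → ℚ} (hρ : IsLatticePt ρ) (hu : IsLatticePt u) :
    ∃ z : ℤ, pairQ ρ u = (z : ℚ) := by
  choose a ha using hρ
  choose b hb using hu
  refine ⟨∑ i, a i * b i, ?_⟩
  unfold pairQ
  push_cast
  exact Finset.sum_congr rfl fun i _ => by rw [ha, hb]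

lemma IsLatticePt.add {u v : Fin n → ℚ} (hu : IsLatticePt u) (hv : IsLatticePt v) :
    IsLatticePt (u + v) := by
  intro i
  obtain ⟨a, ha⟩ := hu i
  obtain ⟨b, hb⟩ := hv i
  exact ⟨a + b, by push_cast; rw [Pi.add_apply, ha, hb]⟩

lemma exists_primitive {q : Fin n → ℚ} (hq : q ≠ 0) :
    ∃ (ρ : Fin n → ℚ) (c : ℚ), 0 < c ∧ ρ = c • q ∧ IsPrimitive ρ := by
  classical
  set m : ℕ := ∏ i, (q i).den with hm
  have hmpos : 0 < m := Finset.prod_pos fun i _ => (q i).pos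
  have hmQ : (0 : ℚ) < (m : ℚ) := by exact_mod_cast hmpos
  set z : Fin n → ℤ := fun i => ((m / (q i).den : ℕ) : ℤ) * (q i).num with hzdef
  have hz : ∀ i, (z i : ℚ) = (m : ℚ) * q i := by
    intro i
    have hdvd : (q i).den ∣ m := Finset.dvd_prod_of_mem _ (Finset.mem_univ i)
    have hden : ((q i).den : ℚ) ≠ 0 := Nat.cast_ne_zero.mpr (q i).den_nz
    have hnum : ((q i).num : ℚ) = q i * ((q i).den : ℚ) :=
      (div_eq_iff hden).mp (Rat.num_div_den (q i))
    have hmden : ((m / (q i).den : ℕ) : ℚ) * ((q i).den : ℚ) = (m : ℚ) := by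
      rw [← Nat.cast_mul, Nat.div_mul_cancel hdvd]
    rw [hzdef]
    dsimp only
    rw [Int.cast_mul, Int.cast_natCast, hnum, ← hmden]
    ring
  have hqnz : ∃ i, q i ≠ 0 := by
    by_contra h
    push_neg at h
    exact hq (funext h)
  obtain ⟨i0, hi0⟩ := hqnz
  have hzi0 : z i0 ≠ 0 := by
    intro h
    apply hi0
    have h2 := hz i0
    rw [h] at h2
    rcases mul_eq_zero.mp h2.symm with h3 | h3
    · exact absurd h3 (ne_of_gt hmQ)
    · exact h3
  set g0 : ℤ := Finset.univ.gcd z with hg0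
  have hgdvd : ∀ i, g0 ∣ z i := fun i => Finset.gcd_dvd (Finset.mem_univ i)
  have hg0ne : g0 ≠ 0 := by
    intro h
    exact hzi0 (Finset.gcd_eq_zero_iff.mp h i0 (Finset.mem_univ i0))
  set g : ℤ := |g0| with hg
  have hgpos : 0 < g := abs_pos.mpr hg0ne
  have hgQ : (0 : ℚ) < (g : ℚ) := by exact_mod_cast hgpos
  have hgdvd' : ∀ i, g ∣ z i := fun i => (abs_dvd g0 (z i)).mpr (hgdvd i)
  set y : Fin n → ℤ := fun i => z i / g with hy
  have hzy : ∀ i, z i = g * y i := fun i => (Int.mul_ediv_cancel' (hgdvd' i)).symm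
  refine ⟨fun i => (y i : ℚ), (m : ℚ) / (g : ℚ), div_pos hmQ hgQ, ?_, ?_, ?_⟩
  · funext i
    have h1 : (g : ℚ) * (y i : ℚ) = (m : ℚ) * q i := by
      rw [← hz i, hzy i]; push_cast; ring
    rw [Pi.smul_apply, smul_eq_mul]
    field_simp
    linarith [h1]
  · intro i
    exact ⟨y i, rfl⟩
  · intro k w hw hkw
    choose wz hwz using hw
    have hky : ∀ i, y i = (k : ℤ) * wz i := by
      intro i
      have h1 := congrFun hkw i
      rw [Pi.smul_apply, smul_eq_mul, hwz] at h1
      exact_mod_cast h1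
    have hdvd1 : ∀ i ∈ Finset.univ, g * (k : ℤ) ∣ z i := by
      intro i _
      exact ⟨wz i, by rw [hzy i, hky i]; ring⟩
    have hdvd2 : g * (k : ℤ) ∣ g0 := Finset.dvd_gcd hdvd1
    have hdvd3 : g * (k : ℤ) ∣ g * 1 := by
      rw [mul_one]
      exact (dvd_abs _ _).mpr hdvd2
    have hdvd4 : (k : ℤ) ∣ 1 := (mul_dvd_mul_iff_left (ne_of_gt hgpos)).mp hdvd3
    have := Int.isUnit_iff.mp (isUnit_of_dvd_one hdvd4)
    rcases this with h | h
    · exact_mod_cast h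
    · exfalso
      have : (0 : ℤ) ≤ (k : ℤ) := Int.natCast_nonneg k
      omega

lemma key_minkowski (S : Finset (Fin n → ℚ))
    (hfull : Submodule.span ℚ (coneHull (S : Set (Fin n → ℚ))) = ⊤)
    (x : Fin n → ℚ)
    (hx : ∀ ρ' ∈ E1 (coneHull (S : Set (Fin n → ℚ))), 0 ≤ pairQ ρ' x) :
    ∀ q ∈ dualCone (coneHull (S : Set (Fin n → ℚ))), 0 ≤ pairQ q x := by
  classical
  set C := coneHull (S : Set (Fin n → ℚ)) with hC
  have hSsub : ∀ s ∈ S, s ∈ C := fun s hs => subset_coneHull _ (by exact_mod_cast hs)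
  have hpointed : ∀ p : Fin n → ℚ, (∀ s ∈ S, pairQ p s = 0) → p = 0 := by
    intro p hp
    refine pointed_of_full hfull ?_
    intro v hv
    obtain ⟨c, hc, rfl⟩ := mem_coneHull_finset.mp hv
    rw [pairQ_sum_right]
    refine Finset.sum_eq_zero fun s hs => ?_
    rw [pairQ_smul_right, hp s hs, mul_zero]
  set Ff : (Fin n → ℚ) → Set (Fin n → ℚ) :=
    fun q => {r | r ∈ dualCone C ∧ ∀ s ∈ S, pairQ q s = 0 → pairQ r s = 0} with hFf
  suffices H : ∀ (d : ℕ) (q : Fin n → ℚ), q ∈ dualCone C →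
      Module.finrank ℚ (Submodule.span ℚ (Ff q)) ≤ d → 0 ≤ pairQ q x by
    intro q hq
    exact H _ q hq le_rfl
  intro d
  induction d using Nat.strong_induction_on with
  | _ d IH =>
  intro q hq hd
  by_cases hq0 : q = 0
  · rw [hq0, pairQ_zero_left]
  have hqS : ∀ s ∈ S, 0 ≤ pairQ q s := fun s hs => hq s (hSsub s hs)
  have hself : q ∈ Ff q := ⟨hq, fun s _ h => h⟩
  by_cases hray : ∀ r ∈ Ff q, r ∈ raySet q
  · -- base case: Ff q = raySet q is a one-dimensional face
    have hsub1 : raySet q ⊆ Ff q := by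
      rintro r ⟨t, ht, rfl⟩
      constructor
      · intro v hv
        rw [pairQ_smul_left]
        exact mul_nonneg ht (hq v hv)
      · intro s hs h
        rw [pairQ_smul_left, h, mul_zero]
    have hFeq : Ff q = raySet q := Set.Subset.antisymm hray hsub1
    set Z := S.filter (fun s => pairQ q s = 0) with hZ
    have hface : IsFaceOfDual C (raySet q) := by
      refine ⟨∑ s ∈ Z, s, ?_, ?_⟩
      · exact coneHull_sum_mem fun s hs => hSsub s (Finset.mem_filter.mp hs).1
      · ext r
        simp only [Set.mem_setOf_eq]
        constructor
        · intro hr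
          have hrF := hsub1 hr
          refine ⟨hrF.1, ?_⟩
          rw [pairQ_sum_right]
          exact Finset.sum_eq_zero fun s hs =>
            hrF.2 s (Finset.mem_filter.mp hs).1 (Finset.mem_filter.mp hs).2
        · rintro ⟨hrD, hrv⟩
          rw [← hFeq]
          refine ⟨hrD, fun s hs h0 => ?_⟩
          rw [pairQ_sum_right] at hrv
          have hnn : ∀ s ∈ Z, 0 ≤ pairQ r s :=
            fun s hs => hrD s (hSsub s (Finset.mem_filter.mp hs).1)
          exact (Finset.sum_eq_zero_iff_of_nonneg hnn).mp hrv s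
            (Finset.mem_filter.mpr ⟨hs, h0⟩)
    obtain ⟨ρ', c, hcpos, hρ'def, hprim⟩ := exists_primitive hq0
    have hrayeq : raySet ρ' = raySet q := by rw [hρ'def]; exact raySet_smul hcpos q
    have hρ'E1 : ρ' ∈ E1 C := ⟨hprim, hrayeq ▸ hface⟩
    have h0 := hx ρ' hρ'E1
    rw [hρ'def, pairQ_smul_left] at h0
    by_contra hcon
    push_neg at hcon
    nlinarith
  · push_neg at hray
    obtain ⟨p, hpF, hpray⟩ := hray
    have hpD : p ∈ dualCone C := hpF.1
    have hpS : ∀ s ∈ S, 0 ≤ pairQ p s := fun s hs => hpD s (hSsub s hs)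
    have hpZ : ∀ s ∈ S, pairQ q s = 0 → pairQ p s = 0 := hpF.2
    have hpnotmul : ∀ c : ℚ, p ≠ c • q := by
      intro c hc
      rcases le_or_gt 0 c with h | h
      · exact hpray ⟨c, h, hc⟩
      · have hp0 : p = 0 := by
          apply hpointed
          intro s hs
          have h1 : 0 ≤ pairQ p s := hpS s hs
          have h2 : pairQ p s = c * pairQ q s := by rw [hc, pairQ_smul_left]
          have h3 := hqS s hs
          nlinarith
        exact hpray ⟨0, le_rfl, by rw [hp0, zero_smul]⟩
    set Sp := S.filter (fun s => 0 < pairQ q s) with hSp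
    have hSpmem : ∀ s ∈ Sp, s ∈ S ∧ 0 < pairQ q s := fun s hs => Finset.mem_filter.mp hs
    have hSpne : Sp.Nonempty := by
      by_contra h
      rw [Finset.not_nonempty_iff_eq_empty] at h
      apply hq0
      apply hpointed
      intro s hs
      rcases eq_or_lt_of_le (hqS s hs) with h0 | h0
      · exact h0.symm
      · exfalso
        have hmem : s ∈ Sp := Finset.mem_filter.mpr ⟨hs, h0⟩
        rw [h] at hmem
        exact absurd hmem (Finset.notMem_empty s)
    set r : (Fin n → ℚ) → ℚ := fun s => pairQ p s / pairQ q s with hrdef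
    obtain ⟨sα, hsα, hα⟩ := Sp.exists_max_image r hSpne
    obtain ⟨sβ, hsβ, hβ⟩ := Sp.exists_min_image r hSpne
    have hαβ : r sβ < r sα := by
      rcases lt_or_ge (r sβ) (r sα) with h | h
      · exact h
      · exfalso
        apply hpnotmul (r sβ)
        have hconst : ∀ s ∈ Sp, r s = r sβ :=
          fun s hs => le_antisymm (le_trans (hα s hs) h) (hβ s hs)
        have h0 : p - r sβ • q = 0 := by
          apply hpointed
          intro s hs
          rw [pairQ_sub_left, pairQ_smul_left]
          by_cases hq0s : pairQ q s = 0
          · rw [hq0s, hpZ s hs hq0s, mul_zero, sub_zero]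
          · have hsSp : s ∈ Sp :=
              Finset.mem_filter.mpr ⟨hs, lt_of_le_of_ne (hqS s hs) (Ne.symm hq0s)⟩
            rw [← hconst s hsSp, hrdef]
            dsimp only
            rw [div_mul_cancel₀ _ hq0s, sub_self]
        exact sub_eq_zero.mp h0
    set γ := (r sα + r sβ) / 2 with hγ
    set p1 := p - γ • q with hp1
    have hp1val : ∀ s, pairQ p1 s = pairQ p s - γ * pairQ q s := by
      intro s
      rw [hp1, pairQ_sub_left, pairQ_smul_left]
    have hp1Z : ∀ s ∈ S, pairQ q s = 0 → pairQ p1 s = 0 := by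
      intro s hs h0
      rw [hp1val, h0, hpZ s hs h0, mul_zero, sub_zero]
    have hp1Sp : ∀ s ∈ Sp, pairQ p1 s = (r s - γ) * pairQ q s := by
      intro s hs
      have hqs : 0 < pairQ q s := (hSpmem s hs).2
      rw [hp1val, hrdef]
      dsimp only
      rw [sub_mul, div_mul_cancel₀ _ (ne_of_gt hqs)]
    have hsαpos : 0 < pairQ p1 sα := by
      rw [hp1Sp sα hsα]
      apply mul_pos _ (hSpmem sα hsα).2
      rw [hγ]; linarith
    have hsβneg : pairQ p1 sβ < 0 := by
      rw [hp1Sp sβ hsβ]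
      apply mul_neg_of_neg_of_pos _ (hSpmem sβ hsβ).2
      rw [hγ]; linarith
    -- plus direction
    set Tp := Sp.filter (fun s => 0 < pairQ p1 s) with hTp
    have hTpne : Tp.Nonempty := ⟨sα, Finset.mem_filter.mpr ⟨hsα, hsαpos⟩⟩
    obtain ⟨sp, hsp, hminp⟩ := Tp.exists_min_image (fun s => pairQ q s / pairQ p1 s) hTpne
    set tp := pairQ q sp / pairQ p1 sp with htp
    have hspSp : sp ∈ Sp := (Finset.mem_filter.mp hsp).1
    have hspp1 : 0 < pairQ p1 sp := (Finset.mem_filter.mp hsp).2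
    have htppos : 0 < tp := div_pos (hSpmem sp hspSp).2 hspp1
    set qp := q - tp • p1 with hqp
    have hqpval : ∀ v, pairQ qp v = pairQ q v - tp * pairQ p1 v := by
      intro v
      rw [hqp, pairQ_sub_left, pairQ_smul_left]
    have hqpS : ∀ s ∈ S, 0 ≤ pairQ qp s := by
      intro s hs
      rw [hqpval]
      by_cases h0 : pairQ q s = 0
      · rw [h0, hp1Z s hs h0, mul_zero, sub_zero]
      · have hsSp : s ∈ Sp :=
          Finset.mem_filter.mpr ⟨hs, lt_of_le_of_ne (hqS s hs) (Ne.symm h0)⟩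
        rcases le_or_gt (pairQ p1 s) 0 with h1 | h1
        · nlinarith [(hSpmem s hsSp).2]
        · have hsTp : s ∈ Tp := Finset.mem_filter.mpr ⟨hsSp, h1⟩
          have h2 := hminp s hsTp
          have h3 : tp * pairQ p1 s ≤ pairQ q s := (le_div_iff₀ h1).mp h2
          linarith
    have hqpD : qp ∈ dualCone C := by
      rw [hC]
      exact mem_dualCone_coneHull.mpr hqpS
    have hqpsp : pairQ qp sp = 0 := by
      rw [hqpval, htp, div_mul_cancel₀ _ (ne_of_gt hspp1), sub_self]
    have hspS : sp ∈ S := (hSpmem sp hspSp).1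
    have hFsubp : Ff qp ⊆ Ff q := by
      rintro r2 ⟨hrD, hrZ⟩
      refine ⟨hrD, fun s hs h0 => hrZ s hs ?_⟩
      rw [hqpval, h0, hp1Z s hs h0, mul_zero, sub_zero]
    have hq_notp : q ∉ Submodule.span ℚ (Ff qp) := by
      intro hmem
      have hle : Submodule.span ℚ (Ff qp) ≤ LinearMap.ker (pairLin sp) := by
        rw [Submodule.span_le]
        rintro r2 ⟨hrD, hrZ⟩
        rw [SetLike.mem_coe, LinearMap.mem_ker, pairLin_apply]
        exact hrZ sp hspS hqpsp
      have h4 := hle hmem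
      rw [LinearMap.mem_ker, pairLin_apply] at h4
      have h5 : 0 < pairQ q sp := (hSpmem sp hspSp).2
      rw [h4] at h5
      exact lt_irrefl 0 h5
    have hltp : Submodule.span ℚ (Ff qp) < Submodule.span ℚ (Ff q) :=
      lt_of_le_of_ne (Submodule.span_mono hFsubp)
        (fun h => hq_notp (h ▸ Submodule.subset_span hself))
    have hrankp : Module.finrank ℚ (Submodule.span ℚ (Ff qp)) < d :=
      lt_of_lt_of_le (Submodule.finrank_lt_finrank_of_lt hltp) hd
    have hqpx : 0 ≤ pairQ qp x := IH _ hrankp qp hqpD le_rfl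
    -- minus direction
    set Tm := Sp.filter (fun s => pairQ p1 s < 0) with hTm
    have hTmne : Tm.Nonempty := ⟨sβ, Finset.mem_filter.mpr ⟨hsβ, hsβneg⟩⟩
    obtain ⟨sm, hsm, hminm⟩ := Tm.exists_min_image (fun s => pairQ q s / (-(pairQ p1 s))) hTmne
    set tm := pairQ q sm / (-(pairQ p1 sm)) with htm
    have hsmSp : sm ∈ Sp := (Finset.mem_filter.mp hsm).1
    have hsmp1 : pairQ p1 sm < 0 := (Finset.mem_filter.mp hsm).2
    have htmpos : 0 < tm := div_pos (hSpmem sm hsmSp).2 (by linarith)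
    set qm := q + tm • p1 with hqm
    have hqmval : ∀ v, pairQ qm v = pairQ q v + tm * pairQ p1 v := by
      intro v
      rw [hqm, pairQ_add_left, pairQ_smul_left]
    have hqmS : ∀ s ∈ S, 0 ≤ pairQ qm s := by
      intro s hs
      rw [hqmval]
      by_cases h0 : pairQ q s = 0
      · rw [h0, hp1Z s hs h0, mul_zero, add_zero]
      · have hsSp : s ∈ Sp :=
          Finset.mem_filter.mpr ⟨hs, lt_of_le_of_ne (hqS s hs) (Ne.symm h0)⟩
        rcases le_or_gt 0 (pairQ p1 s) with h1 | h1
        · nlinarith [(hSpmem s hsSp).2]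
        · have hsTm : s ∈ Tm := Finset.mem_filter.mpr ⟨hsSp, h1⟩
          have h2 := hminm s hsTm
          have h3 : tm * (-(pairQ p1 s)) ≤ pairQ q s := (le_div_iff₀ (by linarith)).mp h2
          linarith
    have hqmD : qm ∈ dualCone C := by
      rw [hC]
      exact mem_dualCone_coneHull.mpr hqmS
    have hqmsm : pairQ qm sm = 0 := by
      have hne : pairQ p1 sm ≠ 0 := ne_of_lt hsmp1
      rw [hqmval, htm, div_mul_eq_mul_div, mul_div_assoc, div_neg, div_self hne,
        mul_neg, mul_one, add_neg_cancel]
    have hsmS : sm ∈ S := (hSpmem sm hsmSp).1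
    have hFsubm : Ff qm ⊆ Ff q := by
      rintro r2 ⟨hrD, hrZ⟩
      refine ⟨hrD, fun s hs h0 => hrZ s hs ?_⟩
      rw [hqmval, h0, hp1Z s hs h0, mul_zero, add_zero]
    have hq_notm : q ∉ Submodule.span ℚ (Ff qm) := by
      intro hmem
      have hle : Submodule.span ℚ (Ff qm) ≤ LinearMap.ker (pairLin sm) := by
        rw [Submodule.span_le]
        rintro r2 ⟨hrD, hrZ⟩
        rw [SetLike.mem_coe, LinearMap.mem_ker, pairLin_apply]
        exact hrZ sm hsmS hqmsm
      have h4 := hle hmem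
      rw [LinearMap.mem_ker, pairLin_apply] at h4
      have h5 : 0 < pairQ q sm := (hSpmem sm hsmSp).2
      rw [h4] at h5
      exact lt_irrefl 0 h5
    have hltm : Submodule.span ℚ (Ff qm) < Submodule.span ℚ (Ff q) :=
      lt_of_le_of_ne (Submodule.span_mono hFsubm)
        (fun h => hq_notm (h ▸ Submodule.subset_span hself))
    have hrankm : Module.finrank ℚ (Submodule.span ℚ (Ff qm)) < d :=
      lt_of_lt_of_le (Submodule.finrank_lt_finrank_of_lt hltm) hd
    have hqmx : 0 ≤ pairQ qm x := IH _ hrankm qm hqmD le_rfl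
    -- combine
    have hcomb : (tp + tm) * pairQ q x = tm * pairQ qp x + tp * pairQ qm x := by
      rw [hqpval, hqmval]
      ring
    have h5 : 0 ≤ (tp + tm) * pairQ q x := by
      rw [hcomb]
      exact add_nonneg (mul_nonneg htmpos.le hqpx) (mul_nonneg htppos.le hqmx)
    by_contra hcon
    push_neg at hcon
    nlinarith

lemma mem_cone_of_E1 {C : Set (Fin n → ℚ)} (hfg : IsFGCone C)
    (hfull : Submodule.span ℚ C = ⊤)
    {x : Fin n → ℚ} (hx : ∀ ρ' ∈ E1 C, 0 ≤ pairQ ρ' x) : x ∈ C := by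
  obtain ⟨S, rfl⟩ := hfg
  by_contra hxC
  obtain ⟨q, hq, hqx⟩ := farkas S x hxC
  have := key_minkowski S hfull x hx q (mem_dualCone_coneHull.mpr hq)
  linarith

/-- With `Γ = M ∩ 𝒢`, `A = K[Γ]`, `ρ ∈ ℰ¹` and `e ∈ ℜ_ρ(ℰ)`, the derivation
`∂_e` is locally nilpotent; more precisely `∂_e^k(χ^u) = 0` for every
`u ∈ Γ` and every integer `k > ⟨ρ, u⟩`. -/
theorem demazure_derivation_locally_nilpotent {n : ℕ} {K : Type*} [Field K] [CharZero K]
    (C : Set (Fin n → ℚ)) (hfg : IsFGCone C) (hfull : Submodule.span ℚ C = ⊤)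
    (Γ : AddSubmonoid (Fin n → ℚ))
    (hΓ : (Γ : Set (Fin n → ℚ)) = {v | IsLatticePt v ∧ v ∈ C})
    (ρ e : Fin n → ℚ) (hρ : ρ ∈ E1 C) (he : e ∈ DemRootsAt C ρ)
    (D : Derivation K (AddMonoidAlgebra K Γ) (AddMonoidAlgebra K Γ))
    (hD : IsDemazureDerivation Γ ρ e D) :
    (∀ a : AddMonoidAlgebra K Γ, ∃ k : ℕ, 0 < k ∧ (⇑D)^[k] a = 0) ∧
    (∀ (u : Γ) (k : ℕ), pairQ ρ ↑u < (k : ℚ) →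
      (⇑D)^[k] (AddMonoidAlgebra.single u 1) = 0) := by
  
  classical
  have hΓmem : ∀ u : Γ, IsLatticePt ((u : Fin n → ℚ)) ∧ (↑u : Fin n → ℚ) ∈ C := by
    intro u
    have hu : (↑u : Fin n → ℚ) ∈ (Γ : Set (Fin n → ℚ)) := u.2
    rwa [hΓ] at hu
  have hρD : ρ ∈ dualCone C := E1_subset_dualCone hρ
  have hρlat : IsLatticePt ρ := hρ.1.1
  obtain ⟨helat, hρe, heρ'⟩ := he
  have hpair_nonneg : ∀ u : Γ, 0 ≤ pairQ ρ ↑u := fun u => hρD _ (hΓmem u).2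
  have hkey : ∀ u : Γ, 0 < pairQ ρ ↑u → (↑u + e : Fin n → ℚ) ∈ Γ := by
    intro u hu
    have hlat : IsLatticePt ((↑u : Fin n → ℚ) + e) := (hΓmem u).1.add helat
    have hone : 1 ≤ pairQ ρ ↑u := by
      obtain ⟨z, hz⟩ := pairQ_int hρlat (hΓmem u).1
      rw [hz] at hu ⊢
      exact_mod_cast (by exact_mod_cast hu : (0:ℤ) < z)
    have hCmem : ((↑u : Fin n → ℚ) + e) ∈ C := by
      refine mem_cone_of_E1 hfg hfull ?_
      intro ρ' hρ'
      rw [pairQ_add_right]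
      by_cases hne : ρ' = ρ
      · subst hne
        rw [hρe]
        linarith
      · have h1 : 0 ≤ pairQ ρ' ↑u := E1_subset_dualCone hρ' _ (hΓmem u).2
        have h2 : 0 ≤ pairQ ρ' e := heρ' ρ' hρ' hne
        linarith
    have hmem : ((↑u : Fin n → ℚ) + e) ∈ (Γ : Set (Fin n → ℚ)) := by
      rw [hΓ]
      exact ⟨hlat, hCmem⟩
    exact hmem
  set L := D.toLinearMap with hL
  have hLD : ∀ (k : ℕ) (a : AddMonoidAlgebra K Γ), (⇑D)^[k] a = (L ^ k) a := by
    intro k a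
    rw [Module.End.pow_apply]
    rfl
  have part2 : ∀ (k : ℕ) (u : Γ), pairQ ρ ↑u < (k : ℚ) →
      (⇑D)^[k] (AddMonoidAlgebra.single u 1) = 0 := by
    intro k
    induction k with
    | zero =>
      intro u hu
      have := hpair_nonneg u
      norm_num at hu
      linarith
    | succ k IH =>
      intro u hu
      rw [Function.iterate_succ_apply]
      rcases eq_or_lt_of_le (hpair_nonneg u) with h0 | h0
      · rw [(hD u).2 h0.symm, hLD, map_zero]
      · have hmem := hkey u h0
        rw [(hD u).1 hmem h0]
        set v : Γ := (⟨↑u + e, hmem⟩ : Γ) with hveq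
        have hv : (v : Fin n → ℚ) = (↑u : Fin n → ℚ) + e := by rw [hveq]
        have hs : AddMonoidAlgebra.single v ((pairQ ρ ↑u : ℚ) : K)
            = ((pairQ ρ ↑u : ℚ) : K) • AddMonoidAlgebra.single v (1 : K) := by
          rw [AddMonoidAlgebra.smul_single', mul_one]
        rw [hs, hLD, map_smul, ← hLD]
        have hlt : pairQ ρ (v : Fin n → ℚ) < (k : ℚ) := by
          rw [hv, pairQ_add_right, hρe]
          push_cast at hu
          linarith
        rw [IH v hlt, smul_zero]
  refine ⟨?_, fun u k h => part2 k u h⟩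
  intro a
  set N := (a.coeff.support.sup fun u => ⌈pairQ ρ ↑u⌉₊) + 1 with hN
  refine ⟨N, Nat.succ_pos _, ?_⟩
  have ha : a = Finsupp.sum a.coeff (fun u c => AddMonoidAlgebra.single u c) :=
    (AddMonoidAlgebra.sum_coeff_single a).symm
  rw [hLD]
  conv_lhs => rw [ha]
  rw [map_finsuppSum, Finsupp.sum]
  refine Finset.sum_eq_zero fun u hu => ?_
  have hsingle : AddMonoidAlgebra.single u (a.coeff u) = (a.coeff u) • AddMonoidAlgebra.single u (1 : K) := by
    rw [AddMonoidAlgebra.smul_single', mul_one]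
  rw [hsingle, map_smul, ← hLD, part2 N u ?_, smul_zero]
  have h1 : pairQ ρ ↑u ≤ (⌈pairQ ρ ↑u⌉₊ : ℚ) := Nat.le_ceil _
  have h2 : (⌈pairQ ρ ↑u⌉₊ : ℕ) ≤ a.coeff.support.sup fun u => ⌈pairQ ρ ↑u⌉₊ := Finset.le_sup (f := fun u : Γ => ⌈pairQ ρ (u : Fin n → ℚ)⌉₊) hu
  have h3 : ((⌈pairQ ρ ↑u⌉₊ : ℕ) : ℚ) ≤ ((a.coeff.support.sup fun u => ⌈pairQ ρ ↑u⌉₊ : ℕ) : ℚ) := by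
    exact_mod_cast h2
  rw [hN]
  push_cast
  linarith


end RootSubgroups
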